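/- arXiv:1507.00182 — 5 statements merged into one kernel-verified Lean document; each statement's English description precedes it below -/
import Mathlib

section
/- With f_c(r) = 2πλP_c·r·exp(-λP_c·π·r²)/(1 - exp(-λP_c·π·R_th²)) and κ, γ, α positive constants with b := κ·γ^{2/α}, one has ∫₀^{R_th} (1 - exp(-λ·b·π·r²))·f_c(r) dr = 1 - P_c·(1 - exp(-λ(P_c + b)·π·R_th²)) / ((1 - exp(-λP_c·π·R_th²))·(P_c + b)). -/
open Real

theorem integral_mul_exp_neg_mul_sq (c R : ℝ) :
    ∫ r in (0 : ℝ)..R, 2 * c * r * exp (-(c * r ^ 2)) = 1 - exp (-(c * R ^ 2)) := by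
  have hderiv (r : ℝ) :
      HasDerivAt (fun r => -exp (-(c * r ^ 2))) (2 * c * r * exp (-(c * r ^ 2))) r := by
    refine ((((hasDerivAt_pow 2 r).const_mul c).fun_neg).exp).fun_neg.congr_deriv ?_
    push_cast
    ring
  rw [intervalIntegral.integral_eq_sub_of_hasDerivAt (fun r _ => hderiv r)
    (by apply Continuous.intervalIntegrable; fun_prop)]
  simp only [zero_pow two_ne_zero, mul_zero, neg_zero, exp_zero]
  ring

theorem integral_one_sub_exp_mul_rayleigh (a c R : ℝ) (hac : a + c ≠ 0) :
    ∫ r in (0 : ℝ)..R, (1 - exp (-(c * r ^ 2))) * (2 * a * r * exp (-(a * r ^ 2))) =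
      1 - exp (-(a * R ^ 2)) - a / (a + c) * (1 - exp (-((a + c) * R ^ 2))) := by
  have hsplit (r : ℝ) :
      (1 - exp (-(c * r ^ 2))) * (2 * a * r * exp (-(a * r ^ 2))) =
        2 * a * r * exp (-(a * r ^ 2)) -
          a / (a + c) * (2 * (a + c) * r * exp (-((a + c) * r ^ 2))) := by
    have hexp : exp (-((a + c) * r ^ 2)) = exp (-(a * r ^ 2)) * exp (-(c * r ^ 2)) := by
      rw [← exp_add]; ring_nf
    rw [hexp]
    field_simp
  simp_rw [hsplit]
  rw [intervalIntegral.integral_sub (by apply Continuous.intervalIntegrable; fun_prop)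
      (by apply Continuous.intervalIntegrable; fun_prop),
    intervalIntegral.integral_const_mul, integral_mul_exp_neg_mul_sq,
    integral_mul_exp_neg_mul_sq]

theorem content_outage_probability_general (lam Pc Rth κ γ α : ℝ)
    (hlam : 0 < lam) (hPc : 0 < Pc) (hR : 0 < Rth)
    (hκ : 0 < κ) (hγ : 0 < γ) :
    let b := κ * γ ^ (2 / α)
    ∫ r in (0 : ℝ)..Rth,
        (1 - Real.exp (-(lam * b * π * r ^ 2))) *
          (2 * π * lam * Pc * r * Real.exp (-(lam * Pc * π * r ^ 2)) /
            (1 - Real.exp (-(lam * Pc * π * Rth ^ 2)))) =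
      1 - Pc * (1 - Real.exp (-(lam * (Pc + b) * π * Rth ^ 2))) /
        ((1 - Real.exp (-(lam * Pc * π * Rth ^ 2))) * (Pc + b)) := by
  intro b
  have hb : 0 < b := by positivity
  have hD : 1 - exp (-(lam * Pc * π * Rth ^ 2)) ≠ 0 := by
    rw [sub_ne_zero, ne_comm, Ne, exp_eq_one_iff, neg_eq_zero]
    positivity
  have hrate : lam * Pc * π + lam * b * π = lam * (Pc + b) * π := by ring
  have hweight : lam * Pc * π / (lam * (Pc + b) * π) = Pc / (Pc + b) := by
    field_simp
  simp_rw [mul_div_assoc',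
    show ∀ r : ℝ, 2 * π * lam * Pc * r = 2 * (lam * Pc * π) * r from fun r => by ring]
  rw [intervalIntegral.integral_div, integral_one_sub_exp_mul_rayleigh _ _ _ (by positivity),
    hrate, hweight]
  field_simp

theorem content_outage_probability (lam Pc Rth κ γ α : ℝ)
    (hlam : 0 < lam) (hPc : 0 < Pc) (hPc1 : Pc ≤ 1) (hR : 0 < Rth)
    (hκ : 0 < κ) (hγ : 0 < γ) (hα : 0 < α) :
    let b := κ * γ ^ (2 / α)
    ∫ r in (0 : ℝ)..Rth,
        (1 - Real.exp (-(lam * b * π * r ^ 2))) *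
          (2 * π * lam * Pc * r * Real.exp (-(lam * Pc * π * r ^ 2)) /
            (1 - Real.exp (-(lam * Pc * π * Rth ^ 2)))) =
      1 - Pc * (1 - Real.exp (-(lam * (Pc + b) * π * Rth ^ 2))) /
        ((1 - Real.exp (-(lam * Pc * π * Rth ^ 2))) * (Pc + b)) :=
  content_outage_probability_general lam Pc Rth κ γ α hlam hPc hR hκ hγ
end

section
/- For fixed λ, P_c, R > 0, the content outage probability P_out(c; b) = 1 - P_c·(1 - exp(-λ(P_c+b)πR²)) / ((1 - exp(-λP_cπR²))·(P_c+b)) is strictly increasing in b > 0 and tends to 1 as b → ∞. -/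
open Real Filter

lemma g_strictAnti (c : ℝ) (hc : 0 < c) :
    StrictAntiOn (fun x : ℝ => (1 - Real.exp (-(c * x))) / x) (Set.Ioi 0) := by
  have hderiv : ∀ x ∈ interior (Set.Ioi (0:ℝ)),
      HasDerivAt (fun x : ℝ => (1 - Real.exp (-(c * x))) / x)
        ((c * Real.exp (-(c * x)) * x - (1 - Real.exp (-(c * x))) * 1) / x ^ 2) x := by
    intro x hx
    rw [interior_Ioi] at hx
    have hx0 : x ≠ 0 := ne_of_gt hx
    have h1 : HasDerivAt (fun x : ℝ => -(c * x)) (-c) x := by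
      simpa using ((hasDerivAt_id x).const_mul c).fun_neg
    have h2 : HasDerivAt (fun x : ℝ => Real.exp (-(c * x))) (Real.exp (-(c * x)) * (-c)) x :=
      (Real.hasDerivAt_exp _).comp x h1
    have h3 : HasDerivAt (fun x : ℝ => 1 - Real.exp (-(c * x))) (c * Real.exp (-(c * x))) x := by
      simpa [mul_comm] using (hasDerivAt_const x (1:ℝ)).fun_sub h2
    exact h3.div (hasDerivAt_id x) hx0
  apply StrictAntiOn.mono (s := Set.Ioi 0) ?_ le_rfl
  apply strictAntiOn_of_deriv_neg (convex_Ioi 0)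
  · apply ContinuousOn.div
    · exact (continuous_const.sub (Real.continuous_exp.comp (by continuity))).continuousOn
    · exact continuous_id.continuousOn
    · intro x hx; exact ne_of_gt hx
  · intro x hx
    rw [(hderiv x hx).deriv]
    rw [interior_Ioi] at hx
    have hcx : 0 < c * x := mul_pos hc hx
    have key := Real.add_one_lt_exp (ne_of_gt hcx)
    have hinv : Real.exp (-(c * x)) = (Real.exp (c * x))⁻¹ := Real.exp_neg _
    have hep : 0 < Real.exp (c * x) := Real.exp_pos _
    have hnum : c * Real.exp (-(c * x)) * x - (1 - Real.exp (-(c * x))) * 1 < 0 := by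
      rw [hinv]
      have hinvpos : 0 < (Real.exp (c * x))⁻¹ := inv_pos.mpr hep
      nlinarith [mul_lt_mul_of_pos_right key hinvpos, mul_inv_cancel₀ (ne_of_gt hep)]
    have hxpos : 0 < x := hx
    exact div_neg_of_neg_of_pos hnum (by positivity)

theorem outage_increasing_in_b (lam Pc R : ℝ)
    (hlam : 0 < lam) (hPc : 0 < Pc) (hR : 0 < R) :
    StrictMonoOn (fun b : ℝ =>
        1 - Pc * (1 - Real.exp (-(lam * (Pc + b) * π * R ^ 2))) /
          ((1 - Real.exp (-(lam * Pc * π * R ^ 2))) * (Pc + b))) (Set.Ioi 0) ∧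
      Tendsto (fun b : ℝ =>
          1 - Pc * (1 - Real.exp (-(lam * (Pc + b) * π * R ^ 2))) /
            ((1 - Real.exp (-(lam * Pc * π * R ^ 2))) * (Pc + b)))
        atTop (nhds 1) := by
  have hpi := Real.pi_pos
  set c : ℝ := lam * π * R ^ 2 with hc
  have hcpos : 0 < c := by positivity
  have hD : 0 < 1 - Real.exp (-(lam * Pc * π * R ^ 2)) := by
    have : Real.exp (-(lam * Pc * π * R ^ 2)) < 1 := by
      apply Real.exp_lt_one_iff.mpr; nlinarith
    linarith
  set D : ℝ := 1 - Real.exp (-(lam * Pc * π * R ^ 2)) with hDdef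
  have heq : ∀ b : ℝ, 0 < b →
      1 - Pc * (1 - Real.exp (-(lam * (Pc + b) * π * R ^ 2))) / (D * (Pc + b))
        = 1 - (Pc / D) * ((1 - Real.exp (-(c * (Pc + b)))) / (Pc + b)) := by
    intro b hb
    have hPb : (0:ℝ) < Pc + b := by linarith
    have harg : lam * (Pc + b) * π * R ^ 2 = c * (Pc + b) := by rw [hc]; ring
    rw [harg]
    field_simp
  constructor
  · intro a ha b hb hab
    simp only [Set.mem_Ioi] at ha hb
    have hPa : (0:ℝ) < Pc + a := by linarith
    have hPb : (0:ℝ) < Pc + b := by linarith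
    have hg := g_strictAnti c hcpos (Set.mem_Ioi.mpr hPa) (Set.mem_Ioi.mpr hPb) (by linarith)
    simp only
    rw [heq a ha, heq b hb]
    have hK : 0 < Pc / D := by positivity
    nlinarith
  · have hnum : Tendsto (fun b : ℝ => Pc * (1 - Real.exp (-(lam * (Pc + b) * π * R ^ 2))))
        atTop (nhds Pc) := by
      have harg : Tendsto (fun b : ℝ => -(lam * (Pc + b) * π * R ^ 2)) atTop atBot := by
        apply tendsto_neg_atBot_iff.mpr
        have : Tendsto (fun b : ℝ => Pc + b) atTop atTop := tendsto_atTop_add_const_left _ _ tendsto_id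
        have h2 : Tendsto (fun b : ℝ => lam * (Pc + b) * (π * R ^ 2)) atTop atTop :=
          (this.const_mul_atTop hlam).atTop_mul_const (by positivity)
        convert h2 using 2 with b
        ring
      have hexp : Tendsto (fun b : ℝ => Real.exp (-(lam * (Pc + b) * π * R ^ 2))) atTop (nhds 0) :=
        Real.tendsto_exp_atBot.comp harg
      have := (tendsto_const_nhds (x := (1:ℝ)) (f := atTop)).sub hexp
      simpa using (tendsto_const_nhds (x := Pc) (f := atTop)).mul this
    have hden : Tendsto (fun b : ℝ => D * (Pc + b)) atTop atTop :=
      (tendsto_atTop_add_const_left _ _ tendsto_id).const_mul_atTop hD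
    have hfrac := hnum.div_atTop hden
    have := (tendsto_const_nhds (x := (1:ℝ)) (f := atTop)).sub hfrac
    simpa using this
end

section
/- For 0 < a < c, the function x ↦ (1 - exp(-c·x))/(1 - exp(-a·x)) is strictly decreasing on (0, ∞). -/
/-! Substituting `q = exp (-(a * x))` turns the ratio into `(1 - q ^ p) / (1 - q)` with
`p = c / a > 1`. This is the slope of the secant of the strictly convex `t ↦ t ^ p` between `q`
and `1`, hence strictly increasing in `q`, while `q` strictly decreases in `x`. -/

open Real

lemma one_sub_rpow_div_one_sub_strictMonoOn {p : ℝ} (hp : 1 < p) :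
    StrictMonoOn (fun q : ℝ => (1 - q ^ p) / (1 - q)) (Set.Ico 0 1) := by
  intro q hq r hr hqr
  have hslope := (strictConvexOn_rpow hp).secant_strict_mono (a := 1)
    (Set.mem_Ici.2 zero_le_one) (Set.mem_Ici.2 hq.1) (Set.mem_Ici.2 hr.1)
    hq.2.ne hr.2.ne hqr
  simpa only [one_rpow, ← neg_sub (1 : ℝ), neg_div_neg_eq] using hslope

lemma exp_neg_mul_mapsTo_Ico {a : ℝ} (ha : 0 < a) :
    Set.MapsTo (fun x : ℝ => exp (-(a * x))) (Set.Ioi 0) (Set.Ico 0 1) :=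
  fun _ hx => ⟨(exp_pos _).le, exp_lt_one_iff.2 (neg_lt_zero.2 (mul_pos ha hx))⟩

lemma exp_neg_mul_strictAnti {a : ℝ} (ha : 0 < a) : StrictAnti fun x : ℝ => exp (-(a * x)) :=
  exp_strictMono.comp_strictAnti fun _ _ hxy => neg_lt_neg (mul_lt_mul_of_pos_left hxy ha)

theorem ratio_strict_anti (a c : ℝ) (ha : 0 < a) (hac : a < c) :
    StrictAntiOn (fun x : ℝ => (1 - Real.exp (-(c * x))) / (1 - Real.exp (-(a * x))))
      (Set.Ioi 0) := by
  have hsubst : (fun x : ℝ => (1 - exp (-(c * x))) / (1 - exp (-(a * x)))) =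
      (fun q : ℝ => (1 - q ^ (c / a)) / (1 - q)) ∘ fun x : ℝ => exp (-(a * x)) := by
    funext x
    simp only [Function.comp_apply, ← exp_mul]
    congr 3
    field_simp
  rw [hsubst]
  exact (one_sub_rpow_div_one_sub_strictMonoOn ((one_lt_div ha).2 hac)).comp_strictAntiOn
    ((exp_neg_mul_strictAnti ha).strictAntiOn _) (exp_neg_mul_mapsTo_Ico ha)
end

section
/- For fixed λ, b, R > 0, the content outage probability P_out(P_c) = 1 - P_c·(1 - exp(-λ(P_c+b)πR²)) / ((1 - exp(-λP_cπR²))·(P_c+b)) is strictly decreasing in P_c on (0, 1]. -/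
open Real

noncomputable def Lfun (c x : ℝ) : ℝ := Real.log (1 - Real.exp (-(c*x))) - Real.log x

noncomputable def Lfun' (c x : ℝ) : ℝ :=
  c * Real.exp (-(c*x)) / (1 - Real.exp (-(c*x))) - 1/x

noncomputable def Lfun'' (c x : ℝ) : ℝ :=
  -(c^2 * Real.exp (-(c*x)) / (1 - Real.exp (-(c*x)))^2) + 1/x^2

lemma one_sub_exp_pos {c x : ℝ} (hc : 0 < c) (hx : 0 < x) :
    0 < 1 - Real.exp (-(c*x)) := by
  have : Real.exp (-(c*x)) < 1 := Real.exp_lt_one_iff.mpr (by nlinarith)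
  linarith

lemma hasDerivAt_exp_neg (c x : ℝ) :
    HasDerivAt (fun y => Real.exp (-(c*y))) (-c * Real.exp (-(c*x))) x := by
  have h1 : HasDerivAt (fun y : ℝ => -(c*y)) (-c) x := by
    exact (((hasDerivAt_id' x).const_mul c).neg).congr_deriv (by ring)
  have h2 := (Real.hasDerivAt_exp (-(c*x))).comp x h1
  rw [Function.comp_def] at h2
  exact h2.congr_deriv (by ring)

lemma hasDerivAt_Lfun {c x : ℝ} (hc : 0 < c) (hx : 0 < x) :
    HasDerivAt (Lfun c) (Lfun' c x) x := by
  have hpos := one_sub_exp_pos hc hx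
  have h1 : HasDerivAt (fun y => 1 - Real.exp (-(c*y))) (c * Real.exp (-(c*x))) x := by
    simpa using ((hasDerivAt_exp_neg c x).const_sub 1)
  have h2 := h1.log hpos.ne'
  have h3 := (Real.hasDerivAt_log hx.ne')
  have e : Lfun c = (fun y => Real.log (1 - Real.exp (-(c*y)))) - Real.log := by
    funext y; simp [Lfun]
  rw [e]
  simpa [Lfun', one_div] using h2.sub h3

lemma hasDerivAt_Lfun' {c x : ℝ} (hc : 0 < c) (hx : 0 < x) :
    HasDerivAt (Lfun' c) (Lfun'' c x) x := by
  have hpos := one_sub_exp_pos hc hx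
  have h1 : HasDerivAt (fun y => c * Real.exp (-(c*y))) (c * (-c * Real.exp (-(c*x)))) x :=
    (hasDerivAt_exp_neg c x).const_mul c
  have h2 : HasDerivAt (fun y => 1 - Real.exp (-(c*y))) (c * Real.exp (-(c*x))) x := by
    simpa using ((hasDerivAt_exp_neg c x).const_sub 1)
  have h3 := h1.div h2 hpos.ne'
  have h4 : HasDerivAt (fun y : ℝ => 1/y) (-(1/x^2)) x := by
    simpa [one_div] using (hasDerivAt_inv hx.ne')
  have h5 := h3.sub h4
  refine h5.congr_deriv ?_
  have hE := Real.exp_pos (-(c*x))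
  have hne := hpos.ne'
  rw [Lfun'']
  field_simp
  ring

lemma Lfun''_pos {c x : ℝ} (hc : 0 < c) (hx : 0 < x) : 0 < Lfun'' c x := by
  have hpos := one_sub_exp_pos hc hx
  have hE := Real.exp_pos (-(c*x))
  -- key inequality: (1 - e^{-cx})^2 > c^2 x^2 e^{-cx}
  have key : c^2 * x^2 * Real.exp (-(c*x)) < (1 - Real.exp (-(c*x)))^2 := by
    set u := c * x with hu
    have hu0 : 0 < u := mul_pos hc hx
    have hsinh : u / 2 < Real.sinh (u / 2) := Real.self_lt_sinh_iff.mpr (by linarith)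
    have hs : Real.sinh (u/2) = (Real.exp (u/2) - Real.exp (-(u/2))) / 2 := Real.sinh_eq _
    have h1 : u < Real.exp (u/2) - Real.exp (-(u/2)) := by
      rw [hs] at hsinh; linarith
    have hfac : 1 - Real.exp (-u) = Real.exp (-(u/2)) * (Real.exp (u/2) - Real.exp (-(u/2))) := by
      rw [mul_sub, ← Real.exp_add, ← Real.exp_add,
        show -(u/2)+u/2 = (0:ℝ) by ring, show -(u/2) + -(u/2) = -u by ring, Real.exp_zero]
    have hsq : u^2 < (Real.exp (u/2) - Real.exp (-(u/2)))^2 := by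
      have h0 : 0 < Real.exp (u/2) - Real.exp (-(u/2)) := lt_trans hu0 h1
      nlinarith
    have hexpu : Real.exp (-u) = Real.exp (-(u/2)) * Real.exp (-(u/2)) := by
      rw [← Real.exp_add]; congr 1; ring
    have hEp := Real.exp_pos (-(u/2))
    calc c^2 * x^2 * Real.exp (-(c*x)) = Real.exp (-u) * u^2 := by rw [hu]; ring_nf
    _ < Real.exp (-u) * (Real.exp (u/2) - Real.exp (-(u/2)))^2 := by
        exact mul_lt_mul_of_pos_left hsq (Real.exp_pos _)
    _ = (1 - Real.exp (-u))^2 := by rw [hfac, hexpu]; ring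
  have h2 : c^2 * Real.exp (-(c*x)) / (1 - Real.exp (-(c*x)))^2 < 1/x^2 := by
    rw [div_lt_div_iff₀ (by positivity) (by positivity)]
    nlinarith
  simp only [Lfun'']
  linarith

lemma Lfun_strictConvex {c : ℝ} (hc : 0 < c) :
    StrictConvexOn ℝ (Set.Ioi 0) (Lfun c) := by
  apply strictConvexOn_of_deriv2_pos (convex_Ioi 0)
  · intro x hx
    exact ((hasDerivAt_Lfun hc hx).continuousAt).continuousWithinAt
  · intro x hx
    rw [interior_Ioi] at hx
    have hd2 : deriv^[2] (Lfun c) x = Lfun'' c x := by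
      have hev : deriv (Lfun c) =ᶠ[nhds x] Lfun' c := by
        filter_upwards [Ioi_mem_nhds hx] with y hy
        exact (hasDerivAt_Lfun hc hy).deriv
      simp only [Function.iterate_succ, Function.iterate_zero, Function.comp_apply, id]
      rw [hev.deriv_eq]
      exact (hasDerivAt_Lfun' hc hx).deriv
    rw [hd2]
    exact Lfun''_pos hc hx

theorem outage_decreasing_in_replication (lam b R : ℝ)
    (hlam : 0 < lam) (hb : 0 < b) (hR : 0 < R) :
    StrictAntiOn (fun Pc : ℝ =>
        1 - Pc * (1 - Real.exp (-(lam * (Pc + b) * π * R ^ 2))) /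
          ((1 - Real.exp (-(lam * Pc * π * R ^ 2))) * (Pc + b)))
      (Set.Ioc 0 1) := by
  set c : ℝ := lam * π * R ^ 2 with hcdef
  have hc : 0 < c := by positivity
  have hconv := Lfun_strictConvex hc
  intro x hx y hy hxy
  obtain ⟨hx0, hx1⟩ := hx
  obtain ⟨hy0, hy1⟩ := hy
  -- key: L(x+b) - L(x) < L(y+b) - L(y)
  have hxb : (0:ℝ) < x + b := by linarith
  have hyb : (0:ℝ) < y + b := by linarith
  have hkey : Lfun c (x+b) - Lfun c x < Lfun c (y+b) - Lfun c y := by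
    have s1 : (Lfun c (x+b) - Lfun c x) / ((x+b) - x) <
        (Lfun c (y+b) - Lfun c x) / ((y+b) - x) :=
      hconv.secant_strict_mono (Set.mem_Ioi.mpr hx0) (Set.mem_Ioi.mpr hxb)
        (Set.mem_Ioi.mpr hyb) (by linarith) (by linarith) (by linarith)
    have s2 : (Lfun c x - Lfun c (y+b)) / (x - (y+b)) <
        (Lfun c y - Lfun c (y+b)) / (y - (y+b)) :=
      hconv.secant_strict_mono (Set.mem_Ioi.mpr hyb) (Set.mem_Ioi.mpr hx0)
        (Set.mem_Ioi.mpr hy0) (by linarith) (by linarith) hxy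
    have e1 : (Lfun c (x+b) - Lfun c x) / ((x+b) - x) = (Lfun c (x+b) - Lfun c x) / b := by
      ring_nf
    have e2 : (Lfun c x - Lfun c (y+b)) / (x - (y+b)) =
        (Lfun c (y+b) - Lfun c x) / ((y+b) - x) := by
      rw [← neg_div_neg_eq]; ring_nf
    have e3 : (Lfun c y - Lfun c (y+b)) / (y - (y+b)) = (Lfun c (y+b) - Lfun c y) / b := by
      rw [← neg_div_neg_eq]; ring_nf
    rw [e1] at s1
    rw [e2, e3] at s2
    have := lt_trans s1 s2
    calc Lfun c (x+b) - Lfun c x = ((Lfun c (x+b) - Lfun c x) / b) * b := by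
          field_simp
    _ < ((Lfun c (y+b) - Lfun c y) / b) * b := by
          exact mul_lt_mul_of_pos_right this hb
    _ = Lfun c (y+b) - Lfun c y := by field_simp
  -- express the function via exp of L differences
  have hg : ∀ z : ℝ, 0 < z →
      z * (1 - Real.exp (-(lam * (z + b) * π * R ^ 2))) /
          ((1 - Real.exp (-(lam * z * π * R ^ 2))) * (z + b)) =
        Real.exp (Lfun c (z+b) - Lfun c z) := by
    intro z hz
    have hzb : (0:ℝ) < z + b := by linarith
    have p1 := one_sub_exp_pos hc hz
    have p2 := one_sub_exp_pos hc hzb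
    have harg1 : lam * z * π * R ^ 2 = c * z := by rw [hcdef]; ring
    have harg2 : lam * (z + b) * π * R ^ 2 = c * (z + b) := by rw [hcdef]; ring
    rw [harg1, harg2]
    simp only [Lfun]
    rw [show Real.log (1 - Real.exp (-(c*(z+b)))) - Real.log (z+b) -
        (Real.log (1 - Real.exp (-(c*z))) - Real.log z) =
        (Real.log (1 - Real.exp (-(c*(z+b)))) + Real.log z) -
        (Real.log (1 - Real.exp (-(c*z))) + Real.log (z+b)) by ring]
    rw [← Real.log_mul p2.ne' hz.ne', ← Real.log_mul p1.ne' hzb.ne',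
      Real.exp_sub, Real.exp_log (by positivity), Real.exp_log (by positivity)]
    field_simp
  simp only
  rw [hg x hx0, hg y hy0]
  have := Real.exp_lt_exp.mpr hkey
  linarith
end

section
/- For fixed b, P_c, R > 0, the function λ ↦ 1 - P_c·(1 - exp(-λ(P_c+b)πR²)) / ((1 - exp(-λP_cπR²))·(P_c+b)) is strictly increasing on (0, ∞). -/
open Real

/-- Key inequality: slope of `exp` from `0` is strictly increasing. -/
lemma exp_slope_key {s t : ℝ} (hs : 0 < s) (hst : s < t) :
    t * (Real.exp s - 1) < s * (Real.exp t - 1) := by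
  have ht : 0 < t := hs.trans hst
  have ha : (0:ℝ) < 1 - s / t := by rw [sub_pos]; exact (div_lt_one ht).2 hst
  have hb : (0:ℝ) < s / t := by positivity
  have h := strictConvexOn_exp.2 (Set.mem_univ (0:ℝ)) (Set.mem_univ t)
    (by linarith : (0:ℝ) ≠ t) ha hb (by ring : (1 - s / t) + s / t = 1)
  simp only [smul_eq_mul, mul_zero, zero_add, Real.exp_zero, mul_one] at h
  have hst' : s / t * t = s := div_mul_cancel₀ s ht.ne'
  rw [hst'] at h
  have h2 := mul_lt_mul_of_pos_left h ht
  have hts : t * (1 - s / t + s / t * Real.exp t) = t - s + s * Real.exp t := by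
    field_simp
  rw [hts] at h2
  nlinarith [h2]

theorem outage_increasing_in_density (Pc b R : ℝ)
    (hPc : 0 < Pc) (hb : 0 < b) (hR : 0 < R) :
    StrictMonoOn (fun lam : ℝ =>
        1 - Pc * (1 - Real.exp (-(lam * (Pc + b) * π * R ^ 2))) /
          ((1 - Real.exp (-(lam * Pc * π * R ^ 2))) * (Pc + b)))
      (Set.Ioi 0) := by
  have hπ : 0 < π := Real.pi_pos
  have hR2 : 0 < R ^ 2 := by positivity
  have hPb : 0 < Pc + b := by linarith
  -- derivative of the function at every point of Ioi 0
  have hder : ∀ x ∈ Set.Ioi (0:ℝ),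
      HasDerivAt (fun lam : ℝ =>
        1 - Pc * (1 - Real.exp (-(lam * (Pc + b) * π * R ^ 2))) /
          ((1 - Real.exp (-(lam * Pc * π * R ^ 2))) * (Pc + b)))
        (0 - ((Pc * (Real.exp (-(x * (Pc + b) * π * R ^ 2)) * ((Pc + b) * π * R ^ 2))) *
              ((1 - Real.exp (-(x * Pc * π * R ^ 2))) * (Pc + b)) -
            (Pc * (1 - Real.exp (-(x * (Pc + b) * π * R ^ 2)))) *
              ((Real.exp (-(x * Pc * π * R ^ 2)) * (Pc * π * R ^ 2)) * (Pc + b))) /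
          ((1 - Real.exp (-(x * Pc * π * R ^ 2))) * (Pc + b)) ^ 2) x := by
    intro x hx
    have hx0 : 0 < x := hx
    have hE1lt : Real.exp (-(x * Pc * π * R ^ 2)) < 1 := by
      rw [Real.exp_lt_one_iff]
      have : 0 < x * Pc * π * R ^ 2 := by positivity
      linarith
    have hDne : (1 - Real.exp (-(x * Pc * π * R ^ 2))) * (Pc + b) ≠ 0 := by
      have : 0 < 1 - Real.exp (-(x * Pc * π * R ^ 2)) := by linarith
      positivity
    have h2 : HasDerivAt (fun lam : ℝ => lam * (Pc + b) * π * R ^ 2)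
        ((Pc + b) * π * R ^ 2) x := by
      simpa using (((hasDerivAt_id x).mul_const (Pc + b)).mul_const π).mul_const (R ^ 2)
    have h1 : HasDerivAt (fun lam : ℝ => lam * Pc * π * R ^ 2)
        (Pc * π * R ^ 2) x := by
      simpa using (((hasDerivAt_id x).mul_const Pc).mul_const π).mul_const (R ^ 2)
    have hN : HasDerivAt (fun lam : ℝ => Pc * (1 - Real.exp (-(lam * (Pc + b) * π * R ^ 2))))
        (Pc * (Real.exp (-(x * (Pc + b) * π * R ^ 2)) * ((Pc + b) * π * R ^ 2))) x := by
      have := ((hasDerivAt_const x (1:ℝ)).sub h2.neg.exp).const_mul Pc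
      refine this.congr_deriv ?_
      simp only [Pi.neg_apply]
      ring
    have hD : HasDerivAt (fun lam : ℝ => (1 - Real.exp (-(lam * Pc * π * R ^ 2))) * (Pc + b))
        ((Real.exp (-(x * Pc * π * R ^ 2)) * (Pc * π * R ^ 2)) * (Pc + b)) x := by
      have := ((hasDerivAt_const x (1:ℝ)).sub h1.neg.exp).mul_const (Pc + b)
      refine this.congr_deriv ?_
      simp only [Pi.neg_apply]
      ring
    exact (hasDerivAt_const x (1:ℝ)).sub (hN.div hD hDne)
  apply strictMonoOn_of_deriv_pos (convex_Ioi 0)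
  · exact fun x hx => ((hder x hx).continuousAt).continuousWithinAt
  · intro x hx
    rw [interior_Ioi] at hx
    rw [(hder x hx).deriv]
    have hx0 : 0 < x := hx
    set E1 := Real.exp (-(x * Pc * π * R ^ 2)) with hE1
    set E2 := Real.exp (-(x * (Pc + b) * π * R ^ 2)) with hE2
    have hE1pos : 0 < E1 := Real.exp_pos _
    have hE2pos : 0 < E2 := Real.exp_pos _
    have hE1lt : E1 < 1 := by
      rw [hE1, Real.exp_lt_one_iff]
      have : 0 < x * Pc * π * R ^ 2 := by positivity
      linarith
    have hE2lt : E2 < 1 := by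
      rw [hE2, Real.exp_lt_one_iff]
      have : 0 < x * (Pc + b) * π * R ^ 2 := by positivity
      linarith
    have hE1inv : E1 * Real.exp (x * Pc * π * R ^ 2) = 1 := by
      rw [hE1, ← Real.exp_add]; simp
    have hE2inv : E2 * Real.exp (x * (Pc + b) * π * R ^ 2) = 1 := by
      rw [hE2, ← Real.exp_add]; simp
    have hkey : (x * (Pc + b) * π * R ^ 2) * (Real.exp (x * Pc * π * R ^ 2) - 1) <
        (x * Pc * π * R ^ 2) * (Real.exp (x * (Pc + b) * π * R ^ 2) - 1) := by
      apply exp_slope_key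
      · positivity
      · have : 0 < x * b * π * R ^ 2 := by positivity
        nlinarith
    set F1 := Real.exp (x * Pc * π * R ^ 2)
    set F2 := Real.exp (x * (Pc + b) * π * R ^ 2)
    have hF1pos : 0 < F1 := Real.exp_pos _
    have hF2pos : 0 < F2 := Real.exp_pos _
    -- reduce to numerator negative
    have hDpos : 0 < ((1 - E1) * (Pc + b)) ^ 2 := by
      have : 0 < 1 - E1 := by linarith
      positivity
    have hnum : (Pc * (E2 * ((Pc + b) * π * R ^ 2))) * ((1 - E1) * (Pc + b)) -
        (Pc * (1 - E2)) * ((E1 * (Pc * π * R ^ 2)) * (Pc + b)) < 0 := by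
      -- multiply key inequality by E1 * E2 / x
      have h3 : ((Pc + b) * π * R ^ 2) * (1 - E1) * E2 <
          (Pc * π * R ^ 2) * (1 - E2) * E1 := by
        have hmul := mul_lt_mul_of_pos_right hkey (by positivity : 0 < E1 * E2)
        have e1 : (x * (Pc + b) * π * R ^ 2) * (F1 - 1) * (E1 * E2) =
            x * (((Pc + b) * π * R ^ 2) * ((F1 * E1 - E1) * E2)) := by ring
        have e2 : (x * Pc * π * R ^ 2) * (F2 - 1) * (E1 * E2) =
            x * ((Pc * π * R ^ 2) * ((F2 * E2 - E2) * E1)) := by ring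
        rw [e1, e2] at hmul
        have hF1E1 : F1 * E1 = 1 := by rw [mul_comm]; exact hE1inv
        have hF2E2 : F2 * E2 = 1 := by rw [mul_comm]; exact hE2inv
        rw [hF1E1, hF2E2] at hmul
        have := lt_of_mul_lt_mul_left hmul hx0.le
        nlinarith [this]
      nlinarith [mul_pos hPc hPb, h3]
    have : (Pc * (E2 * ((Pc + b) * π * R ^ 2))) * ((1 - E1) * (Pc + b)) -
        (Pc * (1 - E2)) * ((E1 * (Pc * π * R ^ 2)) * (Pc + b)) <
        0 := hnum
    rw [zero_sub, neg_pos]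
    exact div_neg_of_neg_of_pos hnum hDpos
end
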